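/- For every real λ with 0 < λ < 1, the period integral of the Legendre elliptic curve satisfies ∫_0^λ dx/√(x(1−x)(λ−x)) = 2·K(√λ). -/

import Mathlib

open MeasureTheory Set

/-! The substitution `x = λ t²` maps `[0, 1]` monotonically onto `[0, λ]`, turns `x (1 - x) (λ - x)`
into `(λ t)² (1 - t²) (1 - λ t²)` and `dx` into `2 λ t dt`, so the integrand becomes
`2 / √((1 - t²) (1 - λ t²))`. -/

/-- The complete elliptic integral of the first kind. -/
noncomputable def Kint (x : ℝ) : ℝ :=
  ∫ t in (0:ℝ)..1, 1 / Real.sqrt ((1 - t ^ 2) * (1 - x ^ 2 * t ^ 2))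

theorem intervalIntegral.integral_eq_integral_comp_const_mul_sq {c : ℝ} (hc : 0 ≤ c)
    (g : ℝ → ℝ) :
    ∫ x in (0:ℝ)..c, g x = ∫ t in (0:ℝ)..1, 2 * c * t * g (c * t ^ 2) := by
  have hsubst : ∫ t in Icc (0:ℝ) 1, 2 * c * t * g (c * t ^ 2) = ∫ x in Icc 0 c, g x := by
    simpa using integral_Icc_deriv_smul_of_deriv_nonneg (g := g) (a := 0) (b := 1)
      (f := fun t => c * t ^ 2) (f' := fun t => 2 * c * t) (by fun_prop)
      (fun t _ => ((hasDerivAt_pow 2 t).const_mul c).congr_deriv (by push_cast; ring))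
      (fun t ht => by have := ht.1; positivity) zero_le_one
  rw [intervalIntegral.integral_of_le hc, intervalIntegral.integral_of_le zero_le_one,
    ← integral_Icc_eq_integral_Ioc, ← integral_Icc_eq_integral_Ioc, hsubst]

theorem sqrt_legendre_cubic_const_mul_sq {l t : ℝ} (hl : 0 ≤ l) (ht : 0 ≤ t) :
    Real.sqrt (l * t ^ 2 * (1 - l * t ^ 2) * (l - l * t ^ 2)) =
      l * t * Real.sqrt ((1 - t ^ 2) * (1 - l * t ^ 2)) := by
  rw [show l * t ^ 2 * (1 - l * t ^ 2) * (l - l * t ^ 2)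
      = (l * t) ^ 2 * ((1 - t ^ 2) * (1 - l * t ^ 2)) by ring,
    Real.sqrt_mul (sq_nonneg _), Real.sqrt_sq (mul_nonneg hl ht)]

theorem legendre_integrand_const_mul_sq {l t : ℝ} (hl : 0 < l) (ht : 0 < t) :
    2 * l * t * (1 / Real.sqrt (l * t ^ 2 * (1 - l * t ^ 2) * (l - l * t ^ 2))) =
      2 * (1 / Real.sqrt ((1 - t ^ 2) * (1 - l * t ^ 2))) := by
  rw [sqrt_legendre_cubic_const_mul_sq hl.le ht.le, one_div, mul_inv, ← mul_assoc,
    mul_assoc 2, mul_inv_cancel_right₀ (mul_pos hl ht).ne', one_div]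

theorem legendre_period_one (l : ℝ) (h0 : 0 < l) :
    (∫ x in (0:ℝ)..l, 1 / Real.sqrt (x * (1 - x) * (l - x))) =
      2 * Kint (Real.sqrt l) := by
  rw [intervalIntegral.integral_eq_integral_comp_const_mul_sq h0.le, Kint, Real.sq_sqrt h0.le,
    ← intervalIntegral.integral_const_mul]
  refine intervalIntegral.integral_congr_ae (Filter.Eventually.of_forall fun t ht => ?_)
  rw [uIoc_of_le zero_le_one] at ht
  exact legendre_integrand_const_mul_sq h0 ht.1
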